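/- arXiv:1810.04587 — 6 statements merged into one kernel-verified Lean document; each statement's English description precedes it below -/
import Mathlib

section
/- Let p be a prime, f, k positive integers, and x an integer. Then the sum of the p-adic digits of the representative of ((p^{fk}-1)/(p^f-1))·x modulo p^{fk}-1 taken in the range [1, p^{fk}-1] equals k times the sum of the p-adic digits of the representative of x modulo p^f-1 taken in the range [1, p^f-1]. -/
/-- Base-`p` digit sum. -/
def digitSum (p n : ℕ) : ℕ := (Nat.digits p n).sum

/-- Digit sum of the representative of `y` modulo `m` lying in `[1, m]`. -/
def repDigitSumPos (p m : ℕ) (y : ℤ) : ℕ :=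
  if (m : ℤ) ∣ y then digitSum p m else digitSum p (y % (m : ℤ)).toNat

/-!
Put `q = p ^ f` and `S = 1 + q + ⋯ + q ^ (k - 1)`, so that `p ^ (f k) - 1 = S (q - 1)`.
If `r ∈ [1, q - 1]` represents `x` modulo `q - 1`, then `S r ∈ [1, p ^ (f k) - 1]` represents
`S x` modulo `p ^ (f k) - 1`. Since `r < q`, the base-`p` expansion of `S r` consists of `k`
copies of the `f`-digit block of `r`.
-/

open Finset

lemma digitSum_add_pow_mul {p n a : ℕ} (hp : 1 < p) (ha : a < p ^ n) (b : ℕ) :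
    digitSum p (a + p ^ n * b) = digitSum p a + digitSum p b := by
  rcases b.eq_zero_or_pos with rfl | hb
  · simp [digitSum]
  have hlen : (Nat.digits p a).length ≤ n := (Nat.digits_length_le_iff hp a).2 ha
  have hsplit :=
    Nat.digits_append_zeroes_append_digits (n := a) (k := n - (Nat.digits p a).length) hp hb
  rw [Nat.add_sub_cancel' hlen] at hsplit
  simp [digitSum, ← hsplit]

lemma digitSum_geom_sum_mul {p n r : ℕ} (hp : 1 < p) (hr : r < p ^ n) (k : ℕ) :
    digitSum p ((∑ i ∈ range k, (p ^ n) ^ i) * r) = k * digitSum p r := by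
  induction k with
  | zero => simp [digitSum]
  | succ k ih =>
    have hshift : (∑ i ∈ range (k + 1), (p ^ n) ^ i) * r
        = r + p ^ n * ((∑ i ∈ range k, (p ^ n) ^ i) * r) := by
      rw [geom_sum_succ]; ring
    rw [hshift, digitSum_add_pow_mul hp hr, ih]
    ring

lemma repDigitSumPos_eq_of_modEq {p m r : ℕ} {y : ℤ} (hr : 0 < r) (hrm : r ≤ m)
    (h : (r : ℤ) ≡ y [ZMOD m]) : repDigitSumPos p m y = digitSum p r := by
  unfold repDigitSumPos
  split_ifs with hy
  · have hmr : (m : ℤ) ∣ r := h.dvd_iff.2 hy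
    rw [Nat.le_antisymm hrm (Nat.le_of_dvd hr (Int.natCast_dvd_natCast.1 hmr))]
  · have hrm' : r < m := hrm.lt_of_ne fun hrm => hy (h.dvd_iff.1 (by rw [hrm]))
    rw [← h.eq, Int.emod_eq_of_lt (by positivity) (by exact_mod_cast hrm'), Int.toNat_natCast]

lemma exists_natCast_modEq_of_pos {m : ℕ} (hm : 0 < m) (y : ℤ) :
    ∃ r : ℕ, 0 < r ∧ r ≤ m ∧ (r : ℤ) ≡ y [ZMOD m] := by
  have hm' : (0 : ℤ) < m := by exact_mod_cast hm
  have h0 := Int.emod_nonneg (y - 1) hm'.ne'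
  have hlt := Int.emod_lt_of_pos (y - 1) hm'
  refine ⟨((y - 1) % m + 1).toNat, by omega, by omega, ?_⟩
  rw [Int.toNat_of_nonneg (by omega)]
  calc (y - 1) % m + 1 ≡ y - 1 + 1 [ZMOD m] := (Int.mod_modEq _ _).add_right 1
    _ = y := sub_add_cancel y 1

theorem hasse_davenport_digit_relation (p f k : ℕ) (hp : p.Prime)
    (hf : 0 < f) (hk : 0 < k) (x : ℤ) :
    repDigitSumPos p (p ^ (f * k) - 1) ((((p ^ (f * k) - 1) / (p ^ f - 1) : ℕ) : ℤ) * x)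
      = k * repDigitSumPos p (p ^ f - 1) x := by
  have hp1 := hp.one_lt
  set S := ∑ i ∈ range k, (p ^ f) ^ i
  have hq : 1 < p ^ f := Nat.one_lt_pow hf.ne' hp1
  have hm : 0 < p ^ f - 1 := Nat.sub_pos_of_lt hq
  have hS : 0 < S := sum_pos (fun _ _ => by positivity) (nonempty_range_iff.2 hk.ne')
  have hM : p ^ (f * k) - 1 = S * (p ^ f - 1) := by rw [pow_mul, geom_sum_mul_of_one_le hq.le]
  obtain ⟨r, hr0, hrm, hr⟩ := exists_natCast_modEq_of_pos hm x
  have hSr : ((S * r : ℕ) : ℤ) ≡ S * x [ZMOD (p ^ (f * k) - 1 : ℕ)] := by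
    rw [hM]; push_cast; exact hr.mul_left'
  rw [hM, Nat.mul_div_cancel _ hm, ← hM,
    repDigitSumPos_eq_of_modEq (Nat.mul_pos hS hr0) (hM ▸ Nat.mul_le_mul_left S hrm) hSr,
    repDigitSumPos_eq_of_modEq hr0 hrm hr, digitSum_geom_sum_mul hp1 (by omega)]
end

section
/- Let p be a prime, f a positive integer, and x a strictly positive integer. Then the sum of the base-p digits of the representative of x modulo p^f-1 in [1, p^f-1] is at most the sum of the base-p digits of x itself. -/
/-!
Write `x = r + p ^ f * q` with `r < p ^ f`. Since `p ^ f ≡ 1 [MOD p ^ f - 1]`, `x ≡ r + q`; and the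
base-`p` digits of `x` are those of `r` (padded with zeros) followed by those of `q`, so
`s(x) = s(r) + s(q) ≥ s(r + q)` by subadditivity of the digit sum `s`. When `x ≥ p ^ f` we have
`r + q < x`, so strong induction reduces to `0 < x ≤ p ^ f - 1`, where `x` is its own representative.
-/

section DigitSum

variable {b : ℕ}

theorem sub_one_mul_sum_div_pow_eq_sub_digitSum (hb : 1 < b) {n N : ℕ} (hN : Nat.log b n < N) :
    (b - 1) * ∑ i ∈ Finset.range N, n / b ^ (i + 1) = n - digitSum b n := by
  rw [digitSum, ← Nat.sub_one_mul_sum_log_div_pow_eq_sub_sum_digits n]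
  congr 1
  refine (Finset.sum_subset (Finset.range_subset_range.mpr hN) fun i _ hi => ?_).symm
  rw [Finset.mem_range, not_lt] at hi
  exact Nat.div_eq_of_lt <| (Nat.lt_pow_succ_log_self hb n).trans_le <|
    Nat.pow_le_pow_right hb.le (by omega)

/-- `n - digitSum b n = (b - 1) * ∑ i, n / b ^ (i + 1)` is superadditive because each
`n / b ^ (i + 1)` is. -/
theorem digitSum_add_le (hb : 1 < b) (m n : ℕ) :
    digitSum b (m + n) ≤ digitSum b m + digitSum b n := by
  set N := Nat.log b (m + n) + 1
  have hm := sub_one_mul_sum_div_pow_eq_sub_digitSum hb (n := m) (N := N)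
    (Nat.lt_succ_of_le (Nat.log_mono_right (Nat.le_add_right m n)))
  have hn := sub_one_mul_sum_div_pow_eq_sub_digitSum hb (n := n) (N := N)
    (Nat.lt_succ_of_le (Nat.log_mono_right (Nat.le_add_left n m)))
  have hmn := sub_one_mul_sum_div_pow_eq_sub_digitSum hb (n := m + n) (Nat.lt_succ_self _)
  have hfloor : ∑ i ∈ Finset.range N, m / b ^ (i + 1) + ∑ i ∈ Finset.range N, n / b ^ (i + 1)
      ≤ ∑ i ∈ Finset.range N, (m + n) / b ^ (i + 1) := by
    rw [← Finset.sum_add_distrib]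
    exact Finset.sum_le_sum fun i _ => Nat.div_add_div_le_add_div
  have key := Nat.mul_le_mul_left (b - 1) hfloor
  rw [Nat.mul_add, hm, hn, hmn] at key
  have : digitSum b m ≤ m := Nat.digit_sum_le b m
  have : digitSum b n ≤ n := Nat.digit_sum_le b n
  have : digitSum b (m + n) ≤ m + n := Nat.digit_sum_le b (m + n)
  omega

theorem digitSum_add_pow_mul_s4 (hb : 1 < b) {f r : ℕ} (hr : r < b ^ f) (q : ℕ) :
    digitSum b (r + b ^ f * q) = digitSum b r + digitSum b q := by
  rcases q.eq_zero_or_pos with rfl | hq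
  · simp [digitSum]
  obtain ⟨k, hk⟩ := Nat.exists_eq_add_of_le ((Nat.digits_length_le_iff hb r).mpr hr)
  rw [digitSum, hk, ← Nat.digits_append_zeroes_append_digits hb hq]
  simp [digitSum]

theorem add_pow_mul_modEq (hb : 0 < b) (f r q : ℕ) : r + b ^ f * q ≡ r + q [MOD b ^ f - 1] := by
  simpa using ((Nat.modEq_sub (Nat.one_le_pow f b hb)).mul_right q).add_left r

end DigitSum

section RepDigitSumPos

variable {p m : ℕ}

theorem repDigitSumPos_congr {y z : ℤ} (h : y ≡ z [ZMOD m]) :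
    repDigitSumPos p m y = repDigitSumPos p m z := by
  simp only [repDigitSumPos, h.dvd_iff, h.eq]

theorem repDigitSumPos_zero (x : ℕ) : repDigitSumPos p 0 x = digitSum p x := by
  simp +contextual [repDigitSumPos]

theorem repDigitSumPos_natCast_of_le {x : ℕ} (hx : 0 < x) (hxm : x ≤ m) :
    repDigitSumPos p m x = digitSum p x := by
  rcases hxm.eq_or_lt with rfl | hlt
  · simp [repDigitSumPos]
  have hndvd : ¬ (m : ℤ) ∣ x := by exact_mod_cast Nat.not_dvd_of_pos_of_lt hx hlt
  rw [repDigitSumPos, if_neg hndvd, Int.emod_eq_of_lt (by positivity) (by exact_mod_cast hlt)]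
  rfl

end RepDigitSumPos

theorem repDigitSumPos_le_digitSum_general (p f x : ℕ) (hx : 0 < x) :
    repDigitSumPos p (p ^ f - 1) (x : ℤ) ≤ digitSum p x := by
  rcases le_or_gt (p ^ f) 1 with hpf | hpf
  · rw [Nat.sub_eq_zero_of_le hpf, repDigitSumPos_zero]
  have hp : 1 < p := lt_of_pow_lt_pow_left₀ f (Nat.zero_le p) (by simpa using hpf)
  induction x using Nat.strong_induction_on with
  | _ x ih =>
  rcases le_or_gt x (p ^ f - 1) with hxm | hxm
  · exact (repDigitSumPos_natCast_of_le hx hxm).le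
  obtain ⟨q, r, hr, hx_eq⟩ : ∃ q r, r < p ^ f ∧ r + p ^ f * q = x :=
    ⟨_, _, Nat.mod_lt x (by omega), Nat.mod_add_div x (p ^ f)⟩
  have hq : 0 < q := Nat.pos_of_ne_zero (by rintro rfl; omega)
  have hlt : r + q < x := by
    have := (Nat.lt_mul_iff_one_lt_left hq).mpr hpf
    omega
  have hmod : (x : ℤ) ≡ (r + q : ℕ) [ZMOD (p ^ f - 1 : ℕ)] :=
    Int.natCast_modEq_iff.mpr (hx_eq ▸ add_pow_mul_modEq (by omega) f r q)
  calc repDigitSumPos p (p ^ f - 1) x = repDigitSumPos p (p ^ f - 1) (r + q : ℕ) :=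
        repDigitSumPos_congr hmod
    _ ≤ digitSum p (r + q) := ih _ hlt (by omega)
    _ ≤ digitSum p r + digitSum p q := digitSum_add_le hp r q
    _ = digitSum p x := by rw [← hx_eq, digitSum_add_pow_mul_s4 hp hr q]

theorem repDigitSumPos_le_digitSum (p f x : ℕ) (hp : p.Prime) (hf : 0 < f) (hx : 0 < x) :
    repDigitSumPos p (p ^ f - 1) (x : ℤ) ≤ digitSum p x :=
  repDigitSumPos_le_digitSum_general p f x hx
end

section
/- For every positive integer f and all integers x, y with 0 ≤ x, y < 3^f, the base-3 digit sum of 23x + 5y + (3^f−1)/2 is at most (base-3 digit sum of x) + (base-3 digit sum of y) + f + 2. -/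
/-!
Add `23 x + 5 y + (11…1)₃` column by column from the bottom. A column consumes the digits `r`, `t`
of `x`, `y` and a `1`, emits one digit and passes on a carry, which stays below `29`. A potential
`ψ` on carries with `s₃ c ≤ ψ c` and (emitted digit) + `ψ` (new carry) `≤ r + t + 1 + ψ` (old carry)
telescopes to the bound `s₃ x + s₃ y + f + ψ 0`, and `ψ 0 = 2` for the least such potential.
-/

open Finset

namespace Nat

theorem digits_sum_add_base_mul {b d : ℕ} (hb : 1 < b) (hd : d < b) (n : ℕ) :
    (b.digits (d + b * n)).sum = d + (b.digits n).sum := by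
  by_cases h : d ≠ 0 ∨ n ≠ 0
  · rw [digits_add b hb d n hd h, List.sum_cons]
  · obtain ⟨rfl, rfl⟩ : d = 0 ∧ n = 0 := by tauto
    simp

structure IsCarryPotential (b α β N : ℕ) (ψ : ℕ → ℕ) : Prop where
  digits_sum_le : ∀ c < N, (b.digits c).sum ≤ ψ c
  carry_lt : ∀ r < b, ∀ t < b, ∀ c < N, (α * r + β * t + 1 + c) / b < N
  column : ∀ r < b, ∀ t < b, ∀ c < N,
    (α * r + β * t + 1 + c) % b + ψ ((α * r + β * t + 1 + c) / b) ≤ r + t + 1 + ψ c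

theorem IsCarryPotential.digits_sum_add_repunit_le {b α β N : ℕ} {ψ : ℕ → ℕ} (hb : 1 < b)
    (hψ : IsCarryPotential b α β N ψ) (f : ℕ) :
    ∀ x < b ^ f, ∀ y < b ^ f, ∀ c < N,
      (b.digits (α * x + β * y + ∑ i ∈ range f, b ^ i + c)).sum
        ≤ (b.digits x).sum + (b.digits y).sum + f + ψ c := by
  induction f with
  | zero =>
    intro x hx y hy c hc
    obtain ⟨rfl, rfl⟩ : x = 0 ∧ y = 0 := by simp_all
    simpa using hψ.digits_sum_le c hc
  | succ f ih =>
    intro x hx y hy c hc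
    obtain ⟨r, a, hr, rfl⟩ : ∃ r a, r < b ∧ x = r + b * a :=
      ⟨x % b, x / b, mod_lt x (by omega), (mod_add_div x b).symm⟩
    obtain ⟨t, e, ht, rfl⟩ : ∃ t e, t < b ∧ y = t + b * e :=
      ⟨y % b, y / b, mod_lt y (by omega), (mod_add_div y b).symm⟩
    have hcarry := hψ.carry_lt r hr t ht c hc
    have hcolumn := hψ.column r hr t ht c hc
    obtain ⟨s, hs⟩ : ∃ s, α * r + β * t + 1 + c = s := ⟨_, rfl⟩
    rw [hs] at hcarry hcolumn
    have ha : a < b ^ f := by rw [pow_succ] at hx; nlinarith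
    have he : e < b ^ f := by rw [pow_succ] at hy; nlinarith
    have hsplit : α * (r + b * a) + β * (t + b * e) + ∑ i ∈ range (f + 1), b ^ i + c
        = s % b + b * (α * a + β * e + ∑ i ∈ range f, b ^ i + s / b) := by
      rw [sum_range_succ', pow_zero]
      simp only [pow_succ', ← mul_sum]
      linarith [mod_add_div s b]
    rw [hsplit, digits_sum_add_base_mul hb (mod_lt s (by omega)),
      digits_sum_add_base_mul hb hr, digits_sum_add_base_mul hb ht]
    have := ih a ha e he _ hcarry
    omega

end Nat

/-- The least carry potential for `23 * x + 5 * y` in base `3`, found by value iteration starting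
from the digit sum; carries never exceed `28` since `(23 * 2 + 5 * 2 + 1 + 28) / 3 = 28`. -/
def carryPotential₂₃₅ (c : ℕ) : ℕ :=
  [2, 3, 4, 3, 4, 3, 4, 5, 4, 3, 4, 3, 4, 5, 4, 3, 4, 5, 4, 5, 4, 5, 6, 5, 4, 5, 6, 3, 4].getD c 0

theorem isCarryPotential_carryPotential₂₃₅ : Nat.IsCarryPotential 3 23 5 29 carryPotential₂₃₅ where
  digits_sum_le := by decide
  carry_lt := by decide
  column := by decide

theorem key_digit_inequality_general (f x y : ℕ) (hx : x < 3 ^ f) (hy : y < 3 ^ f) :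
    (Nat.digits 3 (23 * x + 5 * y + (3 ^ f - 1) / 2)).sum
      ≤ (Nat.digits 3 x).sum + (Nat.digits 3 y).sum + f + 2 := by
  simpa [Nat.geomSum_eq, carryPotential₂₃₅] using
    isCarryPotential_carryPotential₂₃₅.digits_sum_add_repunit_le (by norm_num) f
      x hx y hy 0 (by norm_num)

theorem key_digit_inequality (f x y : ℕ) (hf : 0 < f) (hx : x < 3 ^ f) (hy : y < 3 ^ f) :
    (Nat.digits 3 (23 * x + 5 * y + (3 ^ f - 1) / 2)).sum
      ≤ (Nat.digits 3 x).sum + (Nat.digits 3 y).sum + f + 2 :=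
  key_digit_inequality_general f x y hx hy
end

section
/- Let p be a prime and F ∈ k[x] a polynomial over an algebraically closed field k of characteristic p, such that for every t ∈ k the equations F(x)=t and F'(x)=0 have no common solution. Then F'(x) is a nonzero constant A, and F(x) = G(x)^p + Ax for some polynomial G. In particular, if deg F > 1, then p divides deg F. -/
/-!
A polynomial over an algebraically closed field without roots is a nonzero constant, so the
hypothesis forces `F' = A` with `A ≠ 0`. Then `F - A X` has zero derivative, so in characteristic
`p` it is a polynomial in `X ^ p`, and over the perfect field `k` such a polynomial is a `p`-th
power `G ^ p`. If `deg F > 1`, the linear term does not affect the degree, so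
`deg F = p · deg G`.
-/

open Polynomial

namespace Polynomial

theorem exists_ne_zero_eq_C_of_forall_eval_ne_zero {k : Type*} [Field k] [IsAlgClosed k]
    {P : k[X]} (h : ∀ x, P.eval x ≠ 0) : ∃ A : k, A ≠ 0 ∧ P = C A := by
  have hP : P = C (P.coeff 0) :=
    IsAlgClosed.roots_eq_zero_iff.mp <| Multiset.eq_zero_of_forall_notMem fun x hx ↦
      h x (isRoot_of_mem_roots hx)
  refine ⟨P.coeff 0, fun h0 ↦ h 0 ?_, hP⟩
  rw [hP, h0, eval_C]

theorem exists_eq_pow_of_derivative_eq_zero {R : Type*} [CommSemiring R] [NoZeroDivisors R]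
    (p : ℕ) [ExpChar R p] [PerfectRing R p] {f : R[X]} (hf : derivative f = 0) :
    ∃ g : R[X], f = g ^ p :=
  ⟨_, (expand_contract' p hf).symm.trans (polynomial_expand_eq R p _)⟩

theorem dvd_natDegree_of_eq_pow_add_C_mul_X {R : Type*} [CommRing R] [NoZeroDivisors R]
    {p : ℕ} {F G : R[X]} {A : R} (hF : F = G ^ p + C A * X) (hdeg : 1 < F.natDegree) :
    p ∣ F.natDegree := by
  have hlin : (C A * X).natDegree < F.natDegree :=
    (natDegree_C_mul_le A X).trans_lt (natDegree_X_le.trans_lt hdeg)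
  have hGp : G ^ p = F - C A * X := eq_sub_of_add_eq hF.symm
  refine ⟨G.natDegree, ?_⟩
  rw [← natDegree_sub_eq_left_of_natDegree_lt hlin, ← hGp, natDegree_pow]

end Polynomial

theorem etale_selfmap_of_affine_line {k : Type*} [Field k] [IsAlgClosed k]
    (p : ℕ) [hp : Fact p.Prime] [CharP k p] (F : k[X])
    (h : ∀ t x : k, F.eval x = t → (derivative F).eval x ≠ 0) :
    ∃ A : k, A ≠ 0 ∧ derivative F = C A ∧
      (∃ G : k[X], F = G ^ p + C A * X) ∧
      (1 < F.natDegree → p ∣ F.natDegree) := by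
  obtain ⟨A, hA, hF'⟩ := exists_ne_zero_eq_C_of_forall_eval_ne_zero fun x ↦ h _ x rfl
  have hder : derivative (F - C A * X) = 0 := by
    rw [derivative_sub, hF', derivative_C_mul_X, sub_self]
  obtain ⟨G, hG⟩ := exists_eq_pow_of_derivative_eq_zero p hder
  have hF : F = G ^ p + C A * X := sub_eq_iff_eq_add.mp hG
  exact ⟨A, hA, hF', ⟨G, hF⟩, dvd_natDegree_of_eq_pow_add_C_mul_X hF⟩
end

section
/- Let K be a finite field of odd characteristic p, ψ a nontrivial additive character of K, and d_1 < d_2 < ... < d_{r+1} positive integers. For multiplicative characters ρ_1, ..., ρ_{r+1} of K^×, the multiplicative-character Mellin transform of the function F(t_1,...,t_{r+1}) := Σ_{x∈K^×} ψ(Σ_i t_i x^{d_i}) χ_2(x) (where χ_2 is the quadratic character) equals (q−1)·Π_i g(ψ, ρ_i) if Π_i ρ_i^{d_i} = χ_2, and equals 0 otherwise. Here the Mellin transform is Σ_{(t_1,...,t_{r+1}) ∈ (K^×)^{r+1}} F(t_1,...,t_{r+1}) Π_i ρ_i(t_i), and g(ψ,ρ) := Σ_{t∈K^×} ψ(t)ρ(t)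 is the Gauss sum. -/
/-!
Expanding `ψ (∑ i, t i * x ^ d i)` as a product, the sum over `t` factors, for fixed `x`, into the
Gauss sums of the shifted characters `ψ (x ^ d i * ·)`, and each of these is
`ρ i (x) ^ (-d i) * g(ψ, ρ i)`. What is left is `∑ x, (χ₂ * (∏ i, ρ i ^ d i)⁻¹) x`, which by
orthogonality is `q - 1` or `0`.
-/

open Finset

theorem AddChar.map_sum_eq_prod {A M ι : Type*} [AddCommMonoid A] [CommMonoid M]
    (ψ : AddChar A M) (s : Finset ι) (f : ι → A) : ψ (∑ i ∈ s, f i) = ∏ i ∈ s, ψ (f i) := by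
  induction s using Finset.cons_induction with
  | empty => simp
  | cons a s _ ih => rw [sum_cons, prod_cons, map_add_eq_mul, ih]

namespace MulChar

variable {R R' : Type*} [CommMonoid R]

theorem prod_apply_coe [CommMonoidWithZero R'] {ι : Type*} (s : Finset ι)
    (χ : ι → MulChar R R') (a : Rˣ) : (∏ i ∈ s, χ i) a = ∏ i ∈ s, χ i a := by
  induction s using Finset.cons_induction with
  | empty => simp [one_apply_coe]
  | cons j s _ ih => rw [prod_cons, mul_apply, ih, prod_cons]

variable [Fintype R] [DecidableEq R] [CommRing R']

theorem sum_units_mul_eq_sum (f : R → R') (χ : MulChar R R') :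
    ∑ u : Rˣ, f u * χ u = ∑ a, f a * χ a :=
  Fintype.sum_of_injective _ Units.val_injective _ (fun a => f a * χ a)
    (fun a ha => by rw [map_nonunit χ (fun hu => ha ⟨hu.unit, rfl⟩), mul_zero]) (fun _ => rfl)

theorem sum_units_eq_ite [IsDomain R'] [DecidableEq R'] (χ : MulChar R R') :
    ∑ u : Rˣ, χ u = if χ = 1 then (Fintype.card Rˣ : R') else 0 := by
  split_ifs with hχ
  · simp [hχ, one_apply_coe]
  · simpa [sum_eq_zero_of_ne_one hχ] using sum_units_mul_eq_sum 1 χ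

end MulChar

section GaussSum

variable {R R' : Type*} [CommRing R] [Fintype R] [CommRing R']

theorem prod_gaussSum_mulShift_pow {ι : Type*} [Fintype ι] (ψ : AddChar R R')
    (ρ : ι → MulChar R R') (d : ι → ℕ) (x : Rˣ) :
    ∏ i, gaussSum (ρ i) (ψ.mulShift ((x : R) ^ d i))
      = (∏ i, ρ i ^ d i)⁻¹ x * ∏ i, gaussSum (ρ i) ψ := by
  have hinv (i : ι) : (ρ i)⁻¹ ((x ^ d i : Rˣ) : R) = (ρ i ^ d i)⁻¹ x := by
    rw [← inv_pow, MulChar.pow_apply_coe, Units.val_pow_eq_pow_val, map_pow]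
  simp only [← Units.val_pow_eq_pow_val, gaussSum_mulShift_eq, prod_mul_distrib, hinv,
    ← prod_inv_distrib, MulChar.prod_apply_coe]

variable [DecidableEq R]

theorem gaussSum_eq_sum_units (χ : MulChar R R') (ψ : AddChar R R') :
    gaussSum χ ψ = ∑ u : Rˣ, ψ u * χ u := by
  simp only [gaussSum, mul_comm (χ _), MulChar.sum_units_mul_eq_sum]

theorem sum_pi_units_addChar_mul_prod_mulChar {ι : Type*} [Fintype ι] [DecidableEq ι]
    (ψ : AddChar R R') (ρ : ι → MulChar R R') (a : ι → R) :
    ∑ t : ι → Rˣ, ψ (∑ i, t i * a i) * ∏ i, ρ i (t i)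
      = ∏ i, gaussSum (ρ i) (ψ.mulShift (a i)) := by
  simp only [gaussSum_eq_sum_units, AddChar.mulShift_apply, Fintype.prod_sum,
    AddChar.map_sum_eq_prod, ← prod_mul_distrib, mul_comm (a _)]

end GaussSum

section Mellin

variable {R R' : Type*} [CommRing R] [Fintype R] [DecidableEq R] [CommRing R'] [IsDomain R']
  [DecidableEq R']

theorem mellin_sum_units_addChar_pow {ι : Type*} [Fintype ι] [DecidableEq ι]
    (ψ : AddChar R R') (χ : MulChar R R') (ρ : ι → MulChar R R') (d : ι → ℕ) :
    ∑ t : ι → Rˣ, (∑ x : Rˣ, ψ (∑ i, t i * x ^ d i) * χ x) * ∏ i, ρ i (t i)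
      = if ∏ i, ρ i ^ d i = χ then Fintype.card Rˣ * ∏ i, gaussSum (ρ i) ψ else 0 := by
  calc _ = ∑ x : Rˣ, χ x * ∑ t : ι → Rˣ, ψ (∑ i, t i * (x : R) ^ d i) * ∏ i, ρ i (t i) := by
        simp only [sum_mul, mul_sum]
        rw [sum_comm]
        exact sum_congr rfl fun _ _ => sum_congr rfl fun _ _ => by ring
    _ = ∑ x : Rˣ, χ x * ((∏ i, ρ i ^ d i)⁻¹ x * ∏ i, gaussSum (ρ i) ψ) := by
        simp only [sum_pi_units_addChar_mul_prod_mulChar, prod_gaussSum_mulShift_pow]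
    _ = (∑ x : Rˣ, (χ * (∏ i, ρ i ^ d i)⁻¹) x) * ∏ i, gaussSum (ρ i) ψ := by
        simp only [MulChar.mul_apply, sum_mul, mul_assoc]
    _ = _ := by
        simp only [MulChar.sum_units_eq_ite, mul_inv_eq_one, eq_comm (a := χ)]
        split_ifs <;> ring

end Mellin

theorem mellin_transform_chi2_general {K : Type*} [Field K] [Fintype K] [DecidableEq K]
    (ψ : AddChar K ℂ)
    (r : ℕ) (d : Fin (r + 1) → ℕ)
    (ρ : Fin (r + 1) → MulChar K ℂ) :
    (∑ t : Fin (r + 1) → Kˣ,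
        (∑ x : Kˣ, ψ (∑ i, (t i : K) * (x : K) ^ d i) *
            ((quadraticChar K).ringHomComp (Int.castRingHom ℂ)) (x : K)) *
          ∏ i, ρ i (t i))
      = if (∏ i, (ρ i) ^ d i) = (quadraticChar K).ringHomComp (Int.castRingHom ℂ) then
          ((Fintype.card K : ℂ) - 1) * ∏ i, ∑ x : Kˣ, ψ (x : K) * ρ i (x : K)
        else 0 := by
  rw [mellin_sum_units_addChar_pow, Fintype.card_units, Nat.cast_sub Fintype.card_pos,
    Nat.cast_one]
  simp only [gaussSum_eq_sum_units]

theorem mellin_transform_chi2 {K : Type*} [Field K] [Fintype K] [DecidableEq K]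
    (hch : ringChar K ≠ 2) (ψ : AddChar K ℂ) (hψ : ψ ≠ 1)
    (r : ℕ) (d : Fin (r + 1) → ℕ) (hd : StrictMono d) (hdpos : ∀ i, 0 < d i)
    (ρ : Fin (r + 1) → MulChar K ℂ) :
    (∑ t : Fin (r + 1) → Kˣ,
        (∑ x : Kˣ, ψ (∑ i, (t i : K) * (x : K) ^ d i) *
            ((quadraticChar K).ringHomComp (Int.castRingHom ℂ)) (x : K)) *
          ∏ i, ρ i (t i))
      = if (∏ i, (ρ i) ^ d i) = (quadraticChar K).ringHomComp (Int.castRingHom ℂ) then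
          ((Fintype.card K : ℂ) - 1) * ∏ i, ∑ x : Kˣ, ψ (x : K) * ρ i (x : K)
        else 0 :=
  mellin_transform_chi2_general ψ r d ρ
end

section
/- Let p be a prime and suppose there exists a real constant A ≥ 0 such that for every positive integer f and integers 0 ≤ x_2,...,x_{r+1} < p^f−1, not all zero, one has s_p(Σ_i d_i x_i) ≤ Σ_i s_p(x_i) + f(p−1)/2 + A, where d_2,...,d_{r+1} are fixed positive integers prime to p. Then for every positive integer f and every such tuple not all zero, [Σ_i d_i x_i]_{p,f} ≤ Σ_i [x_i]_{p,f,-} + f(p−1)/2, where [·]_{p,f} and [·]_{p,f,-} are the digit sums of representatives mod p^f−1 in [1,p^f−1] and [0,p^f−2] respectively. -/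
open Finset

/-!
Multiplying `x` by the repunit `∑_{j<k} (p^f)^j = (p^{fk} - 1)/(p^f - 1)` writes `k` copies of its
`f`-digit block side by side, so it multiplies every digit sum by `k`, and it also maps the
representative in `[1, p^f - 1]` to the representative in `[1, p^{fk} - 1]`. Reducing modulo
`p^F - 1` folds blocks of `F` digits onto each other, which by subadditivity of the digit sum can
only lower it. The hypothesis at level `fk` thus gives `k · LHS ≤ k · RHS + A` for every `k ≥ 1`,
and letting `k → ∞` removes `A`.
-/

open Nat in
theorem digitSum_add_le_s17 {p : ℕ} (hp : p.Prime) (a b : ℕ) :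
    digitSum p (a + b) ≤ digitSum p a + digitSum p b := by
  have := Fact.mk hp
  -- Legendre: `(p - 1) v_p(n!) = n - s_p(n)`, and `a! b! ∣ (a + b)!`.
  have hv : padicValNat p (a !) + padicValNat p (b !) ≤ padicValNat p ((a + b)!) := by
    obtain ⟨c, hc⟩ := factorial_mul_factorial_dvd_factorial_add a b
    rw [hc, padicValNat.mul (by positivity) (right_ne_zero_of_mul (hc ▸ factorial_ne_zero _)),
      padicValNat.mul (factorial_ne_zero _) (factorial_ne_zero _)]
    exact le_self_add
  have := Nat.mul_le_mul_left (p - 1) hv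
  rw [mul_add, sub_one_mul_padicValNat_factorial, sub_one_mul_padicValNat_factorial,
    sub_one_mul_padicValNat_factorial] at this
  have := digit_sum_le p a
  have := digit_sum_le p b
  have := digit_sum_le p (a + b)
  unfold digitSum
  omega

theorem digitSum_mul_pow_add {p F b : ℕ} (hp : 1 < p) (a : ℕ) (hb : b < p ^ F) :
    digitSum p (a * p ^ F + b) = digitSum p a + digitSum p b := by
  rcases Nat.eq_zero_or_pos a with rfl | ha
  · simp [digitSum]
  have hlen : (p.digits b).length ≤ F := (Nat.digits_length_le_iff hp b).2 hb
  have hdigits :=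
    Nat.digits_append_zeroes_append_digits (k := F - (p.digits b).length) (n := b) hp ha
  rw [Nat.add_sub_cancel' hlen] at hdigits
  simp [digitSum, mul_comm a, ← hdigits, add_comm]

theorem sub_one_mul_geomSum {b : ℕ} (hb : 0 < b) (k : ℕ) :
    (b - 1) * ∑ j ∈ range k, b ^ j = b ^ k - 1 := by
  obtain ⟨c, rfl⟩ : ∃ c, b = c + 1 := ⟨b - 1, by omega⟩
  have := geom_sum_mul_add c k
  rw [Nat.add_sub_cancel, mul_comm]
  omega

theorem mul_geomSum_lt {b x : ℕ} (hx : x < b) (k : ℕ) :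
    x * ∑ j ∈ range k, b ^ j < b ^ k := by
  have h := sub_one_mul_geomSum (b := b) (by omega) k
  have := Nat.mul_le_mul_right (∑ j ∈ range k, b ^ j) (Nat.le_sub_one_of_lt hx)
  have := Nat.one_le_pow k b (by omega)
  omega

theorem digitSum_mul_geomSum {p F x : ℕ} (hp : 1 < p) (hx : x < p ^ F) (k : ℕ) :
    digitSum p (x * ∑ j ∈ range k, (p ^ F) ^ j) = k * digitSum p x := by
  induction k with
  | zero => simp [digitSum]
  | succ k ih =>
    rw [sum_range_succ, mul_add, add_comm, ← pow_mul,
      digitSum_mul_pow_add hp x (pow_mul p F k ▸ mul_geomSum_lt hx k), ih]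
    ring

/-- The representative of `n` modulo `m` in `[1, m]` when `n ≥ 1` (truncated subtraction makes
`posMod m 0 = 1`); `posMod 0 n = n`. -/
def posMod (m n : ℕ) : ℕ := (n - 1) % m + 1

theorem posMod_eq_self {m n : ℕ} (hn : 0 < n) (hnm : n ≤ m) : posMod m n = n := by
  rw [posMod, Nat.mod_eq_of_lt (by omega)]
  omega

theorem posMod_add_mul_self {m n : ℕ} (hn : 0 < n) (k : ℕ) :
    posMod m (n + k * m) = posMod m n := by
  rw [posMod, posMod, Nat.sub_add_comm hn, Nat.add_mul_mod_self_right]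

theorem posMod_le {m : ℕ} (hm : 0 < m) (n : ℕ) : posMod m n ≤ m :=
  Nat.mod_lt _ hm

theorem posMod_mul_right {m y R : ℕ} (hy : 0 < y) (hR : 0 < R) :
    posMod (m * R) (y * R) = posMod m y * R := by
  rcases Nat.eq_zero_or_pos m with rfl | hm
  · simp only [posMod, zero_mul, Nat.mod_zero]
    have := Nat.mul_le_mul_right R hy
    rw [Nat.sub_add_cancel hy]
    omega
  have hpos : 0 < posMod m y * R := Nat.mul_pos (Nat.succ_pos _) hR
  have hy' : y * R - 1 = (posMod m y * R - 1) + (m * R) * ((y - 1) / m) := by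
    have hy : y = m * ((y - 1) / m) + posMod m y := by
      have := Nat.div_add_mod (y - 1) m
      rw [posMod]
      omega
    have : y * R = (m * R) * ((y - 1) / m) + posMod m y * R := by
      conv_lhs => rw [hy]
      ring
    omega
  have hlt : posMod m y * R - 1 < m * R := by
    have := Nat.mul_le_mul_right R (posMod_le hm y)
    omega
  rw [posMod, hy', Nat.add_mul_mod_self_left, Nat.mod_eq_of_lt hlt, Nat.sub_add_cancel hpos]

theorem posMod_mod {n : ℕ} (hn : 0 < n) (m : ℕ) : posMod m n % m = n % m := by
  rw [posMod, Nat.mod_add_mod, Nat.sub_add_cancel hn]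

theorem repDigitSumPos_natCast (p m : ℕ) {n : ℕ} (hn : 0 < n) :
    repDigitSumPos p m n = digitSum p (posMod m n) := by
  rcases Nat.eq_zero_or_pos m with rfl | hm
  · simp [repDigitSumPos, posMod, hn.ne', Nat.sub_add_cancel hn]
  have hle := posMod_le hm n
  unfold repDigitSumPos
  split_ifs with hdvd
  · rw [Int.natCast_dvd_natCast, Nat.dvd_iff_mod_eq_zero, ← posMod_mod hn,
      ← Nat.dvd_iff_mod_eq_zero] at hdvd
    rw [le_antisymm hle (Nat.le_of_dvd (Nat.succ_pos _) hdvd)]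
  · rw [Int.natCast_dvd_natCast, Nat.dvd_iff_mod_eq_zero, ← posMod_mod hn] at hdvd
    have hlt : posMod m n < m := lt_of_le_of_ne hle (by rintro h; simp [h] at hdvd)
    rw [← Int.natCast_mod, Int.toNat_natCast, ← posMod_mod hn, Nat.mod_eq_of_lt hlt]

theorem digitSum_posMod_le {p : ℕ} (hp : p.Prime) (F : ℕ) {n : ℕ} (hn : 0 < n) :
    digitSum p (posMod (p ^ F - 1) n) ≤ digitSum p n := by
  rcases F.eq_zero_or_pos with rfl | hF
  · simp [posMod, Nat.sub_add_cancel hn]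
  have hpF : 1 < p ^ F := Nat.one_lt_pow hF.ne' hp.one_lt
  induction n using Nat.strong_induction_on with
  | _ n ih =>
  by_cases hsmall : n < p ^ F
  · rw [posMod_eq_self hn (by omega)]
  obtain ⟨a, b, hb, rfl⟩ : ∃ a b, b < p ^ F ∧ n = a * p ^ F + b :=
    ⟨n / p ^ F, n % p ^ F, Nat.mod_lt _ (by omega), (Nat.div_add_mod' n _).symm⟩
  have ha : 0 < a := Nat.pos_of_ne_zero (by rintro rfl; omega)
  have hlt : a + b < a * p ^ F + b := by nlinarith
  have hcong : a * p ^ F + b = (a + b) + a * (p ^ F - 1) := by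
    rw [Nat.mul_sub_one]
    have := Nat.le_mul_of_pos_right a (by omega : 0 < p ^ F)
    omega
  calc digitSum p (posMod (p ^ F - 1) (a * p ^ F + b))
      = digitSum p (posMod (p ^ F - 1) (a + b)) := by
        rw [hcong, posMod_add_mul_self (by omega)]
    _ ≤ digitSum p (a + b) := ih _ hlt (by omega)
    _ ≤ digitSum p a + digitSum p b := digitSum_add_le_s17 hp a b
    _ = digitSum p (a * p ^ F + b) := (digitSum_mul_pow_add hp.one_lt a hb).symm

theorem digitSum_posMod_mul_geomSum {p f y k : ℕ} (hp : 1 < p) (hf : 0 < f) (hy : 0 < y)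
    (hk : 0 < k) :
    digitSum p (posMod (p ^ (f * k) - 1) (y * ∑ j ∈ range k, (p ^ f) ^ j))
      = k * digitSum p (posMod (p ^ f - 1) y) := by
  have hpf : 1 < p ^ f := Nat.one_lt_pow hf.ne' hp
  have hG : 0 < ∑ j ∈ range k, (p ^ f) ^ j := geom_sum_pos (Nat.zero_le _) hk.ne'
  rw [pow_mul, ← sub_one_mul_geomSum (by omega), posMod_mul_right hy hG,
    digitSum_mul_geomSum hp (Nat.lt_of_le_sub_one (by omega) (posMod_le (by omega) y))]

theorem le_of_forall_pos_nat_mul_le_add {α : Type*} [CommRing α] [LinearOrder α]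
    [IsStrictOrderedRing α] [Archimedean α] {a b : α} (c : α)
    (h : ∀ k : ℕ, 0 < k → k * a ≤ k * b + c) : a ≤ b := by
  by_contra! hba
  obtain ⟨n, hn⟩ := Archimedean.arch c (sub_pos.2 hba)
  have := h (n + 1) n.succ_pos
  rw [nsmul_eq_mul] at hn
  push_cast at this
  nlinarith

theorem finite_monodromy_digit_criterion_general (p : ℕ) (hp : p.Prime) (r : ℕ)
    (d : Fin r → ℕ) (hdpos : ∀ i, 0 < d i)
    (hA : ∃ A : ℝ, 0 ≤ A ∧ ∀ f : ℕ, 0 < f → ∀ x : Fin r → ℕ,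
      (∀ i, x i < p ^ f - 1) → (∃ i, x i ≠ 0) →
      (digitSum p (∑ i, d i * x i) : ℝ)
        ≤ (∑ i, (digitSum p (x i) : ℝ)) + f * ((p : ℝ) - 1) / 2 + A) :
    ∀ f : ℕ, 0 < f → ∀ x : Fin r → ℕ,
      (∀ i, x i < p ^ f - 1) → (∃ i, x i ≠ 0) →
      (repDigitSumPos p (p ^ f - 1) ((∑ i, d i * x i : ℕ) : ℤ) : ℝ)
        ≤ (∑ i, (digitSum p (x i) : ℝ)) + f * ((p : ℝ) - 1) / 2 := by
  obtain ⟨A, -, hA⟩ := hA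
  intro f hf x hx ⟨i₀, hi₀⟩
  have hy : 0 < ∑ i, d i * x i := (Nat.mul_pos (hdpos i₀) (Nat.pos_of_ne_zero hi₀)).trans_le
    (single_le_sum (fun i _ => Nat.zero_le (d i * x i)) (mem_univ i₀))
  rw [repDigitSumPos_natCast p _ hy]
  refine le_of_forall_pos_nat_mul_le_add A fun k hk => ?_
  set G := ∑ j ∈ range k, (p ^ f) ^ j
  have hpf : 0 < p ^ f := pow_pos hp.pos f
  have hG : 0 < G := geom_sum_pos (Nat.zero_le _) hk.ne'
  have hxG : ∀ i, x i * G < p ^ (f * k) - 1 := fun i => by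
    rw [pow_mul, ← sub_one_mul_geomSum hpf]
    exact Nat.mul_lt_mul_of_pos_right (hx i) hG
  have hdigits : ∀ i, digitSum p (x i * G) = k * digitSum p (x i) := fun i =>
    digitSum_mul_geomSum hp.one_lt ((hx i).trans_le (Nat.sub_le _ 1)) k
  calc (k : ℝ) * digitSum p (posMod (p ^ f - 1) (∑ i, d i * x i))
      = digitSum p (posMod (p ^ (f * k) - 1) ((∑ i, d i * x i) * G)) := by
        rw [digitSum_posMod_mul_geomSum hp.one_lt hf hy hk, Nat.cast_mul]
    _ ≤ digitSum p ((∑ i, d i * x i) * G) := by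
        exact_mod_cast digitSum_posMod_le hp _ (Nat.mul_pos hy hG)
    _ = digitSum p (∑ i, d i * (x i * G)) := by simp_rw [sum_mul, mul_assoc]
    _ ≤ ∑ i, (digitSum p (x i * G) : ℝ) + (f * k : ℕ) * ((p : ℝ) - 1) / 2 + A :=
        hA (f * k) (Nat.mul_pos hf hk) _ hxG ⟨i₀, Nat.mul_ne_zero hi₀ hG.ne'⟩
    _ = k * (∑ i, (digitSum p (x i) : ℝ) + f * ((p : ℝ) - 1) / 2) + A := by
        simp only [hdigits]
        push_cast
        rw [← mul_sum]
        ring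

theorem finite_monodromy_digit_criterion (p : ℕ) (hp : p.Prime) (r : ℕ)
    (d : Fin r → ℕ) (hdpos : ∀ i, 0 < d i) (hdp : ∀ i, Nat.Coprime (d i) p)
    (hA : ∃ A : ℝ, 0 ≤ A ∧ ∀ f : ℕ, 0 < f → ∀ x : Fin r → ℕ,
      (∀ i, x i < p ^ f - 1) → (∃ i, x i ≠ 0) →
      (digitSum p (∑ i, d i * x i) : ℝ)
        ≤ (∑ i, (digitSum p (x i) : ℝ)) + f * ((p : ℝ) - 1) / 2 + A) :
    ∀ f : ℕ, 0 < f → ∀ x : Fin r → ℕ,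
      (∀ i, x i < p ^ f - 1) → (∃ i, x i ≠ 0) →
      (repDigitSumPos p (p ^ f - 1) ((∑ i, d i * x i : ℕ) : ℤ) : ℝ)
        ≤ (∑ i, (digitSum p (x i) : ℝ)) + f * ((p : ℝ) - 1) / 2 :=
  finite_monodromy_digit_criterion_general p hp r d hdpos hA
end
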